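/- Let γ ∈ ℂ*. The pair U(z) = V(z) = sinh(γz)/√(π sinh(|γ|²)) · e^{-|z|²/2} is an L²(ℂ)-normalized element of the Bargmann-Fock space E satisfying Π(|U|²U) = (1/(4π)) U. -/

import Mathlib

/-!
The functions `gaussExp κ a b z = exp (-κ|z|² + a z + b z̄)` are closed under products and
conjugation, and `∫ gaussExp κ a b = (π/κ) exp (ab/κ)` by Fubini and the one-dimensional Gaussian
integral. Since `sinh (γz) e^{-|z|²/2}` is a combination of two of them, both `|U|²` and the
integrand of `Π(|U|²U)` are finite sums of such Gaussians, and integrating term by term gives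
`∫ |U|² = π sinh |γ|² / C²` and `Π(|U|²U) = sinh |γ|² / (4C²) · U` for the normalising constant `C`.
-/

open MeasureTheory Complex

noncomputable section

/-- The LLL projection Π given by its integral kernel. -/
def Proj (u : ℂ → ℂ) (z : ℂ) : ℂ :=
  (Real.pi : ℂ)⁻¹ * Complex.exp (-((‖z‖ ^ 2 : ℝ) : ℂ) / 2) *
    ∫ w : ℂ, Complex.exp ((starRingEnd ℂ) w * z - ((‖w‖ ^ 2 : ℝ) : ℂ) / 2) * u w

open ComplexConjugate

def gaussExp (κ a b z : ℂ) : ℂ := cexp (-κ * ((‖z‖ ^ 2 : ℝ) : ℂ) + a * z + b * conj z)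

lemma gaussExp_mul_gaussExp (κ a b κ' a' b' z : ℂ) :
    gaussExp κ a b z * gaussExp κ' a' b' z = gaussExp (κ + κ') (a + a') (b + b') z := by
  simp only [gaussExp, ← Complex.exp_add]
  ring_nf

lemma conj_gaussExp (κ a b z : ℂ) :
    conj (gaussExp κ a b z) = gaussExp (conj κ) (conj b) (conj a) z := by
  simp only [gaussExp, ← Complex.exp_conj, map_add, map_mul, map_neg, conj_ofReal, conj_conj]
  ring_nf

-- The `+ 0` matches the shape of `integral_cexp_quadratic`.
lemma gaussExp_equivRealProd_symm (κ a b : ℂ) (p : ℝ × ℝ) :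
    gaussExp κ a b (measurableEquivRealProd.symm p) =
      cexp (-κ * p.1 ^ 2 + (a + b) * p.1 + 0) * cexp (-κ * p.2 ^ 2 + (a - b) * I * p.2 + 0) := by
  have hp : measurableEquivRealProd.symm p = p.1 + p.2 * I := by
    apply Complex.ext <;> simp
  have hnorm : ((‖(p.1 + p.2 * I : ℂ)‖ ^ 2 : ℝ) : ℂ) = (p.1 : ℂ) ^ 2 + (p.2 : ℂ) ^ 2 := by
    rw [← ofReal_pow, Complex.sq_norm, normSq_add_mul_I]; push_cast; ring
  rw [gaussExp, ← Complex.exp_add, hp, hnorm]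
  congr 1
  simp only [map_add, map_mul, conj_ofReal, conj_I]
  ring_nf

section Gaussian

variable {κ : ℂ}

lemma integrable_gaussExp (hκ : 0 < κ.re) (a b : ℂ) : Integrable (gaussExp κ a b) := by
  rw [← volume_preserving_equiv_real_prod.symm.integrable_comp_emb
    measurableEquivRealProd.symm.measurableEmbedding]
  simp_rw [Function.comp_def, gaussExp_equivRealProd_symm]
  exact (integrable_cexp_quadratic hκ _ _).mul_prod (integrable_cexp_quadratic hκ _ _)

lemma integral_gaussExp (hκ : 0 < κ.re) (a b : ℂ) :
    ∫ z, gaussExp κ a b z = Real.pi / κ * cexp (a * b / κ) := by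
  have hκ' : κ ≠ 0 := by rintro rfl; simp at hκ
  have hneg : (-κ).re < 0 := by simpa using hκ
  rw [← volume_preserving_equiv_real_prod.symm.integral_comp
    measurableEquivRealProd.symm.measurableEmbedding]
  simp_rw [gaussExp_equivRealProd_symm]
  rw [Measure.volume_eq_prod, integral_prod_mul (f := fun x : ℝ => cexp (-κ * x ^ 2 + (a + b) * x + 0))
    (g := fun y : ℝ => cexp (-κ * y ^ 2 + (a - b) * I * y + 0)), integral_cexp_quadratic hneg,
    integral_cexp_quadratic hneg, mul_mul_mul_comm, ← cpow_add _ _ (by simp [hκ', Real.pi_ne_zero]),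
    ← Complex.exp_add, neg_neg]
  rw [show (1 / 2 : ℂ) + 1 / 2 = 1 by norm_num, cpow_one, zero_sub, zero_sub, mul_pow, I_sq]
  congr 2
  field_simp
  ring

variable {ι : Type*}

lemma integrable_finset_sum_gaussExp (hκ : 0 < κ.re) (s : Finset ι) (c a b : ι → ℂ) :
    Integrable (fun z => ∑ i ∈ s, c i * gaussExp κ (a i) (b i) z) :=
  integrable_finsetSum s fun i _ => (integrable_gaussExp hκ (a i) (b i)).const_mul (c i)

lemma integral_finset_sum_gaussExp (hκ : 0 < κ.re) (s : Finset ι) (c a b : ι → ℂ) :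
    ∫ z, ∑ i ∈ s, c i * gaussExp κ (a i) (b i) z =
      ∑ i ∈ s, c i * (Real.pi / κ * cexp (a i * b i / κ)) := by
  rw [integral_finsetSum s fun i _ => (integrable_gaussExp hκ (a i) (b i)).const_mul (c i)]
  simp only [integral_const_mul, integral_gaussExp hκ]

end Gaussian

def sinhGauss (γ z : ℂ) : ℂ := sinh (γ * z) * cexp (-((‖z‖ ^ 2 : ℝ) : ℂ) / 2)

lemma sinhGauss_eq_sum (γ z : ℂ) :
    sinhGauss γ z = ∑ s ∈ ({1, -1} : Finset ℝ), (s / 2 : ℂ) * gaussExp (1 / 2) (s * γ) 0 z := by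
  rw [Finset.sum_pair (by norm_num), sinhGauss, Complex.sinh, gaussExp, gaussExp]
  simp only [Complex.exp_add, zero_mul, Complex.exp_zero, mul_one, ofReal_one, ofReal_neg, one_mul,
    neg_div, neg_mul]
  ring_nf

lemma normSq_sinhGauss (γ z : ℂ) :
    ((‖sinhGauss γ z‖ ^ 2 : ℝ) : ℂ) = ∑ p ∈ ({1, -1} : Finset ℝ) ×ˢ ({1, -1} : Finset ℝ),
      (p.1 * p.2 / 4 : ℂ) * gaussExp 1 (p.2 * γ) (p.1 * conj γ) z := by
  rw [ofReal_pow, ← conj_mul', sinhGauss_eq_sum, map_sum, Finset.sum_mul_sum, Finset.sum_product]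
  refine Finset.sum_congr rfl fun s _ => Finset.sum_congr rfl fun t _ => ?_
  rw [map_mul, conj_gaussExp, mul_mul_mul_comm, gaussExp_mul_gaussExp]
  simp only [map_mul, map_div₀, map_ofNat, map_one, conj_ofReal, map_zero]
  congr 1
  · ring
  · congr 1 <;> ring

lemma integrable_normSq_sinhGauss (γ : ℂ) : Integrable (fun z => ‖sinhGauss γ z‖ ^ 2) := by
  have h : Integrable (fun z => ((‖sinhGauss γ z‖ ^ 2 : ℝ) : ℂ)) := by
    simp_rw [normSq_sinhGauss]
    exact integrable_finset_sum_gaussExp (by norm_num) _ _ _ _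
  exact h.re

lemma memLp_two_sinhGauss (γ : ℂ) : MemLp (sinhGauss γ) 2 :=
  (memLp_two_iff_integrable_sq_norm (by unfold sinhGauss; fun_prop : Continuous _).aestronglyMeasurable).2
    (integrable_normSq_sinhGauss γ)

lemma integral_normSq_sinhGauss (γ : ℂ) :
    ∫ z, ‖sinhGauss γ z‖ ^ 2 = Real.pi * Real.sinh (‖γ‖ ^ 2) := by
  apply ofReal_injective
  rw [← integral_complex_ofReal]
  simp_rw [normSq_sinhGauss]
  rw [integral_finset_sum_gaussExp (by norm_num)]
  simp only [Finset.sum_product, Finset.sum_pair (show (1 : ℝ) ≠ -1 by norm_num)]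
  rw [ofReal_mul, ofReal_sinh, ofReal_pow ‖γ‖, ← mul_conj' γ]
  norm_num [Complex.sinh]
  ring

lemma proj_const_mul (c : ℂ) (u : ℂ → ℂ) (z : ℂ) : Proj (fun w => c * u w) z = c * Proj u z := by
  simp only [Proj, mul_left_comm _ c, integral_const_mul]

lemma kernel_eq_gaussExp (z w : ℂ) :
    cexp (conj w * z - ((‖w‖ ^ 2 : ℝ) : ℂ) / 2) = gaussExp (1 / 2) 0 z w := by
  rw [gaussExp]; ring_nf

lemma kernel_mul_cube_sinhGauss (γ z w : ℂ) :
    cexp (conj w * z - ((‖w‖ ^ 2 : ℝ) : ℂ) / 2) * (((‖sinhGauss γ w‖ ^ 2 : ℝ) : ℂ) * sinhGauss γ w) =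
      ∑ p ∈ (({1, -1} : Finset ℝ) ×ˢ ({1, -1} : Finset ℝ)) ×ˢ ({1, -1} : Finset ℝ),
        (p.1.1 * p.1.2 * p.2 / 8 : ℂ) * gaussExp 2 ((p.1.2 + p.2) * γ) (z + p.1.1 * conj γ) w := by
  rw [kernel_eq_gaussExp, normSq_sinhGauss, sinhGauss_eq_sum, Finset.sum_mul_sum, Finset.mul_sum,
    Finset.sum_product (({1, -1} : Finset ℝ) ×ˢ ({1, -1} : Finset ℝ))]
  refine Finset.sum_congr rfl fun p _ => ?_
  rw [Finset.mul_sum]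
  refine Finset.sum_congr rfl fun u _ => ?_
  rw [show ∀ K c g d h : ℂ, K * (c * g * (d * h)) = c * d * (K * g * h) from fun _ _ _ _ _ => by ring,
    gaussExp_mul_gaussExp, gaussExp_mul_gaussExp]
  congr 1
  · ring
  · congr 1 <;> ring

lemma proj_cube_sinhGauss (γ z : ℂ) :
    Proj (fun w => ((‖sinhGauss γ w‖ ^ 2 : ℝ) : ℂ) * sinhGauss γ w) z =
      Real.sinh (‖γ‖ ^ 2) / 4 * sinhGauss γ z := by
  simp only [Proj, kernel_mul_cube_sinhGauss]
  rw [integral_finset_sum_gaussExp (by norm_num)]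
  simp only [Finset.sum_product, Finset.sum_pair (show (1 : ℝ) ≠ -1 by norm_num)]
  rw [sinhGauss, ofReal_sinh, ofReal_pow ‖γ‖, ← mul_conj' γ]
  norm_num [Complex.sinh]
  -- the four terms with `p.1.2 = -p.2` have cancelled; the others recombine into `sinh · sinh`
  rw [show 2 * γ * (z + conj γ) / 2 = γ * z + γ * conj γ by ring,
    show -(2 * γ * (z + conj γ)) / 2 = -(γ * z) + -(γ * conj γ) by ring,
    show 2 * γ * (z + -conj γ) / 2 = γ * z + -(γ * conj γ) by ring,
    show -(2 * γ * (z + -conj γ)) / 2 = -(γ * z) + γ * conj γ by ring]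
  simp only [Complex.exp_add, Complex.exp_neg]
  field_simp
  ring

/-- U(z) = sinh(γz) e^{-|z|²/2}/√(π sinh|γ|²) is a normalized element of the
Bargmann-Fock space satisfying Π(|U|²U) = U/(4π). -/
theorem stmt18 (γ : ℂ) (hγ : γ ≠ 0) (U : ℂ → ℂ)
    (hU : ∀ z, U z = Complex.sinh (γ * z)
        / ((Real.sqrt (Real.pi * Real.sinh (‖γ‖ ^ 2)) : ℝ) : ℂ)
        * Complex.exp (-((‖z‖ ^ 2 : ℝ) : ℂ) / 2)) :
    (∃ f : ℂ → ℂ, Differentiable ℂ f ∧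
        ∀ z, U z = f z * Complex.exp (-((‖z‖ ^ 2 : ℝ) : ℂ) / 2))
    ∧ MemLp U 2 volume
    ∧ (∫ z : ℂ, ‖U z‖ ^ 2) = 1
    ∧ ∀ z : ℂ, Proj (fun w => ((‖U w‖ ^ 2 : ℝ) : ℂ) * U w) z
        = (1 / (4 * (Real.pi : ℂ))) * U z := by
  set C := Real.sqrt (Real.pi * Real.sinh (‖γ‖ ^ 2))
  have hsinh : 0 < Real.sinh (‖γ‖ ^ 2) := Real.sinh_pos_iff.2 (by positivity)
  have hC2 : C ^ 2 = Real.pi * Real.sinh (‖γ‖ ^ 2) := Real.sq_sqrt (by positivity)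
  have hUC : U = fun z => (C : ℂ)⁻¹ * sinhGauss γ z := funext fun z => by rw [hU, sinhGauss]; ring
  have hnormU (z : ℂ) : ‖U z‖ ^ 2 = (C ^ 2)⁻¹ * ‖sinhGauss γ z‖ ^ 2 := by
    simp [hUC, mul_pow]
  refine ⟨⟨fun z => sinh (γ * z) / C, by fun_prop, hU⟩, ?_, ?_, fun z => ?_⟩
  · rw [hUC]
    exact (memLp_two_sinhGauss γ).const_mul _
  · rw [integral_congr_ae (.of_forall hnormU), integral_const_mul, integral_normSq_sinhGauss, ← hC2,
      inv_mul_cancel₀ (by positivity)]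
  · have hcube : (fun w => ((‖U w‖ ^ 2 : ℝ) : ℂ) * U w) =
        fun w => ((C : ℂ) ^ 3)⁻¹ * (((‖sinhGauss γ w‖ ^ 2 : ℝ) : ℂ) * sinhGauss γ w) := by
      funext w
      rw [hnormU]
      simp only [hUC]
      push_cast
      ring
    have hC2' : (C : ℂ) ^ 2 = Real.pi * Real.sinh (‖γ‖ ^ 2) := by exact_mod_cast hC2
    have hsinh' : (Real.sinh (‖γ‖ ^ 2) : ℂ) ≠ 0 := by exact_mod_cast hsinh.ne'
    rw [hcube, proj_const_mul, proj_cube_sinhGauss, hUC, pow_succ, hC2']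
    field_simp
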